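/- The embedding e from λJms into λJmse strictly simulates reduction: if t → t' in λJms then e(t) →⁺ e(t') in λJmse; similarly, if l → l' then e(l) →⁺ e(l'). -/
import Mathlib


-- Terms, co-terms and commands of the λJmse-calculus.
mutual
inductive Tm : Type
  | var : ℕ → Tm
  | lam : ℕ → Tm → Tm
  | coe : Cmd → Tm
  deriving DecidableEq
inductive Co : Type
  | nil : Co
  | cons : Tm → Co → Co
  | sel : ℕ → Cmd → Co
  deriving DecidableEq
inductive Cmd : Type
  | cut : Tm → Co → Cmd
  deriving DecidableEq
end

-- Capture-avoiding (structural) substitution.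
mutual
def substTm (t : Tm) (x : ℕ) : Tm → Tm
  | .var y => if x = y then t else .var y
  | .lam y u => .lam y (substTm t x u)
  | .coe c => .coe (substCmd t x c)
def substCo (t : Tm) (x : ℕ) : Co → Co
  | .nil => .nil
  | .cons u l => .cons (substTm t x u) (substCo t x l)
  | .sel y c => .sel y (substCmd t x c)
def substCmd (t : Tm) (x : ℕ) : Cmd → Cmd
  | .cut u l => .cut (substTm t x u) (substCo t x l)
end

-- Free variables.
mutual
def freeTm : Tm → Finset ℕ
  | .var x => {x}
  | .lam x t => freeTm t \ {x}
  | .coe c => freeCmd c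
def freeCo : Co → Finset ℕ
  | .nil => ∅
  | .cons u l => freeTm u ∪ freeCo l
  | .sel x c => freeCmd c \ {x}
def freeCmd : Cmd → Finset ℕ
  | .cut t l => freeTm t ∪ freeCo l
end

/-- Eager append of co-terms. -/
def appendCo : Co → Co → Co
  | .nil, l' => l'
  | .cons u l, l' => .cons u (appendCo l l')
  | .sel x (.cut t l), l' => .sel x (.cut t (appendCo l l'))

/-- Evaluation contexts: co-terms of the form `[]` or `u::l`. -/
def IsE : Co → Prop
  | .nil => True
  | .cons _ _ => True
  | .sel _ _ => False

-- One-step reduction of λJmse.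
mutual
inductive StepTm : Tm → Tm → Prop
  | eps (t : Tm) : StepTm (.coe (.cut t .nil)) t
  | lam {t t' : Tm} (x : ℕ) : StepTm t t' → StepTm (.lam x t) (.lam x t')
  | coe {c c' : Cmd} : StepCmd c c' → StepTm (.coe c) (.coe c')
inductive StepCo : Co → Co → Prop
  | mu {x : ℕ} {l : Co} : x ∉ freeCo l →
      StepCo (.sel x (.cut (.var x) l)) l
  | consL {u u' : Tm} (l : Co) : StepTm u u' → StepCo (.cons u l) (.cons u' l)
  | consR {l l' : Co} (u : Tm) : StepCo l l' → StepCo (.cons u l) (.cons u l')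
  | sel {c c' : Cmd} (x : ℕ) : StepCmd c c' → StepCo (.sel x c) (.sel x c')
inductive StepCmd : Cmd → Cmd → Prop
  | beta (x : ℕ) (t u : Tm) (l : Co) :
      StepCmd (.cut (.lam x t) (.cons u l)) (.cut u (.sel x (.cut t l)))
  | pi (t : Tm) (l E : Co) : IsE E →
      StepCmd (.cut (.coe (.cut t l)) E) (.cut t (appendCo l E))
  | sigma (t : Tm) (x : ℕ) (c : Cmd) :
      StepCmd (.cut t (.sel x c)) (substCmd t x c)
  | cutL {t t' : Tm} (l : Co) : StepTm t t' → StepCmd (.cut t l) (.cut t' l)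
  | cutR {l l' : Co} (t : Tm) : StepCo l l' → StepCmd (.cut t l) (.cut t l')
end

-- The λJms-calculus.
mutual
inductive MTm : Type
  | var : ℕ → MTm
  | lam : ℕ → MTm → MTm
  | app : MTm → MCo → MTm
  deriving DecidableEq
inductive MCo : Type
  | cons : MTm → MCo → MCo
  | sel : ℕ → MTm → MCo
  deriving DecidableEq
end

def MTm.IsValue : MTm → Prop
  | .var _ => True
  | .lam _ _ => True
  | .app _ _ => False

mutual
def msubstTm (t : MTm) (x : ℕ) : MTm → MTm
  | .var y => if x = y then t else .var y
  | .lam y u => .lam y (msubstTm t x u)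
  | .app u l => .app (msubstTm t x u) (msubstCo t x l)
def msubstCo (t : MTm) (x : ℕ) : MCo → MCo
  | .cons u l => .cons (msubstTm t x u) (msubstCo t x l)
  | .sel y v => .sel y (msubstTm t x v)
end

mutual
def mfreeTm : MTm → Finset ℕ
  | .var x => {x}
  | .lam x t => mfreeTm t \ {x}
  | .app t l => mfreeTm t ∪ mfreeCo l
def mfreeCo : MCo → Finset ℕ
  | .cons u l => mfreeTm u ∪ mfreeCo l
  | .sel x v => mfreeTm v \ {x}
end

-- Eager append of λJms co-terms.
def mappend : MCo → MCo → MCo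
  | .cons u l, l' => .cons u (mappend l l')
  | .sel x (.var y), l' => .sel x (.app (.var y) l')
  | .sel x (.lam y t), l' => .sel x (.app (.lam y t) l')
  | .sel x (.app t l), l' => .sel x (.app t (mappend l l'))

-- One-step reduction of λJms.
mutual
inductive MStepTm : MTm → MTm → Prop
  | beta (x : ℕ) (t u : MTm) (l : MCo) :
      MStepTm (.app (.lam x t) (.cons u l)) (.app u (.sel x (.app t l)))
  | pi (t : MTm) (l : MCo) (u : MTm) (l' : MCo) :
      MStepTm (.app (.app t l) (.cons u l')) (.app t (mappend l (.cons u l')))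
  | sigma (t : MTm) (x : ℕ) (v : MTm) :
      MStepTm (.app t (.sel x v)) (msubstTm t x v)
  | lam {t t' : MTm} (x : ℕ) : MStepTm t t' → MStepTm (.lam x t) (.lam x t')
  | appL {t t' : MTm} (l : MCo) : MStepTm t t' → MStepTm (.app t l) (.app t' l)
  | appR {l l' : MCo} (t : MTm) : MStepCo l l' → MStepTm (.app t l) (.app t l')
inductive MStepCo : MCo → MCo → Prop
  | mu {x : ℕ} {l : MCo} : x ∉ mfreeCo l → MStepCo (.sel x (.app (.var x) l)) l
  | consL {u u' : MTm} (l : MCo) : MStepTm u u' → MStepCo (.cons u l) (.cons u' l)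
  | consR {l l' : MCo} (u : MTm) : MStepCo l l' → MStepCo (.cons u l) (.cons u l')
  | sel {v v' : MTm} (x : ℕ) : MStepTm v v' → MStepCo (.sel x v) (.sel x v')
end

-- The embedding e : λJms → λJmse.
mutual
def eTm : MTm → Tm
  | .var x => .var x
  | .lam x t => .lam x (eTm t)
  | .app t l => .coe (.cut (eTm t) (eCo l))
def eCo : MCo → Co
  | .cons u l => .cons (eTm u) (eCo l)
  | .sel x (.var y) => .sel x (.cut (.var y) .nil)
  | .sel x (.lam y t) => .sel x (.cut (.lam y (eTm t)) .nil)
  | .sel x (.app t l) => .sel x (.cut (eTm t) (eCo l))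
end
open Relation

theorem appendCo_nil : ∀ l : Co, appendCo l .nil = l
  | .nil => rfl
  | .cons u l => by rw [appendCo, appendCo_nil l]
  | .sel x (.cut t l) => by rw [appendCo, appendCo_nil l]

/-- The command inside `eCo (.sel x v)`. -/
def cmdOf : MTm → Cmd
  | .var y => .cut (.var y) .nil
  | .lam y t => .cut (.lam y (eTm t)) .nil
  | .app t l => .cut (eTm t) (eCo l)

theorem eCo_sel (x : ℕ) (v : MTm) : eCo (.sel x v) = .sel x (cmdOf v) := by
  cases v <;> simp [eCo, cmdOf, eTm]

theorem eCo_mappend : ∀ l l' : MCo, eCo (mappend l l') = appendCo (eCo l) (eCo l')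
  | .cons u l, l' => by rw [mappend]; simp only [eCo, appendCo, eCo_mappend l l']
  | .sel x (.var y), l' => by rw [mappend]; simp [eCo, appendCo, eTm]
  | .sel x (.lam y t), l' => by rw [mappend]; simp [eCo, appendCo, eTm]
  | .sel x (.app t l), l' => by
      rw [mappend]; simp only [eCo, appendCo, eCo_mappend l l']

mutual
theorem free_eTm : ∀ t : MTm, freeTm (eTm t) = mfreeTm t
  | .var x => rfl
  | .lam x t => by simp only [eTm, freeTm, free_eTm t, mfreeTm]
  | .app t l => by simp only [eTm, freeTm, freeCmd, free_eTm t, free_eCo l, mfreeTm]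
theorem free_eCo : ∀ l : MCo, freeCo (eCo l) = mfreeCo l
  | .cons u l => by simp only [eCo, freeCo, free_eTm u, free_eCo l, mfreeCo]
  | .sel x (.var y) => by simp [eCo, freeCo, freeCmd, freeTm, mfreeCo, mfreeTm]
  | .sel x (.lam y t) => by simp [eCo, freeCo, freeCmd, freeTm, mfreeCo, mfreeTm, free_eTm t]
  | .sel x (.app t l) => by
      simp [eCo, freeCo, freeCmd, mfreeCo, mfreeTm, free_eTm t, free_eCo l]
end

theorem rtg_cut {t t' : Tm} {l l' : Co} (ht : ReflTransGen StepTm t t')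
    (hl : ReflTransGen StepCo l l') : ReflTransGen StepCmd (.cut t l) (.cut t' l') :=
  .trans (ht.lift (fun a => Cmd.cut a l) (fun _ _ h => .cutL l h))
         (hl.lift (fun a => Cmd.cut t' a) (fun _ _ h => .cutR t' h))

theorem cmdOf_red : ∀ v : MTm, ReflTransGen StepCmd (.cut (eTm v) .nil) (cmdOf v)
  | .var x => by simp only [eTm, cmdOf]; exact .refl
  | .lam x t => by simp only [eTm, cmdOf]; exact .refl
  | .app t l => by
      have h := StepCmd.pi (eTm t) (eCo l) .nil trivial
      rw [appendCo_nil] at h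
      simp only [eTm, cmdOf]
      exact .single h

mutual
theorem substE_tm (t : MTm) (x : ℕ) :
    ∀ u : MTm, ReflTransGen StepTm (substTm (eTm t) x (eTm u)) (eTm (msubstTm t x u))
  | .var y => by
      by_cases h : x = y
      · simp only [eTm, substTm, msubstTm, if_pos h]; exact .refl
      · simp only [eTm, substTm, msubstTm, if_neg h]; exact .refl
  | .lam y u => by
      simp only [eTm, substTm, msubstTm]
      exact (substE_tm t x u).lift (fun a => Tm.lam y a) (fun _ _ h => .lam y h)
  | .app u l => by
      simp only [eTm, substTm, msubstTm, substCmd]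
      exact (rtg_cut (substE_tm t x u) (substE_co t x l)).lift
        (fun c => Tm.coe c) (fun _ _ h => .coe h)
theorem substE_co (t : MTm) (x : ℕ) :
    ∀ l : MCo, ReflTransGen StepCo (substCo (eTm t) x (eCo l)) (eCo (msubstCo t x l))
  | .cons u l => by
      simp only [eCo, substCo, msubstCo]
      exact .trans
        ((substE_tm t x u).lift (fun a => Co.cons a (substCo (eTm t) x (eCo l)))
          (fun _ _ h => .consL _ h))
        ((substE_co t x l).lift (fun a => Co.cons (eTm (msubstTm t x u)) a)
          (fun _ _ h => .consR _ h))
  | .sel y v => by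
      rw [eCo_sel, msubstCo, eCo_sel]
      simp only [substCo]
      exact (subst_cmdOf t x v).lift (fun c => Co.sel y c) (fun _ _ h => .sel y h)
theorem subst_cmdOf (t : MTm) (x : ℕ) :
    ∀ v : MTm, ReflTransGen StepCmd (substCmd (eTm t) x (cmdOf v)) (cmdOf (msubstTm t x v))
  | .var y => by
      by_cases h : x = y
      · simp only [cmdOf, substCmd, substTm, substCo, msubstTm, if_pos h]
        exact cmdOf_red t
      · simp only [cmdOf, substCmd, substTm, substCo, msubstTm, if_neg h]; exact .refl
  | .lam y s => by
      simp only [cmdOf, substCmd, substTm, substCo, msubstTm]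
      exact rtg_cut ((substE_tm t x s).lift (fun a => Tm.lam y a) (fun _ _ h => .lam y h)) .refl
  | .app s l => by
      simp only [cmdOf, substCmd, msubstTm]
      exact rtg_cut (substE_tm t x s) (substE_co t x l)
end

theorem sigma_core (t : MTm) (x : ℕ) (v : MTm) :
    Relation.TransGen StepCmd (.cut (eTm t) (eCo (.sel x v))) (cmdOf (msubstTm t x v)) := by
  rw [eCo_sel]
  exact Relation.TransGen.head' (StepCmd.sigma (eTm t) x (cmdOf v)) (subst_cmdOf t x v)

theorem coe_cmdOf : ∀ v : MTm, ReflTransGen StepTm (.coe (cmdOf v)) (eTm v)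
  | .var x => .single (StepTm.eps _)
  | .lam x t => .single (StepTm.eps _)
  | .app t l => by simp only [cmdOf, eTm]; exact .refl

mutual
theorem simTm : ∀ {t t' : MTm}, MStepTm t t' → Relation.TransGen StepTm (eTm t) (eTm t')
  | _, _, .beta x t u l => by
      simp only [eTm, eCo]
      exact .single (.coe (.beta x (eTm t) (eTm u) (eCo l)))
  | _, _, .pi t l u l' => by
      simp only [eTm, eCo, eCo_mappend]
      exact .single (.coe (.pi (eTm t) (eCo l) (.cons (eTm u) (eCo l')) trivial))
  | _, _, .sigma t x v => by
      simp only [eTm]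
      exact ((sigma_core t x v).lift (fun c => Tm.coe c) (fun _ _ h => .coe h)).trans_left
        (coe_cmdOf _)
  | _, _, .lam x h => by
      simp only [eTm]
      exact (simTm h).lift (fun a => Tm.lam x a) (fun _ _ hh => .lam x hh)
  | _, _, .appL l h => by
      simp only [eTm]
      exact (simTm h).lift (fun a => Tm.coe (.cut a (eCo l))) (fun _ _ hh => .coe (.cutL _ hh))
  | _, _, .appR t h => by
      simp only [eTm]
      exact (simCo h).lift (fun a => Tm.coe (.cut (eTm t) a)) (fun _ _ hh => .coe (.cutR _ hh))
theorem simCmd : ∀ {t t' : MTm}, MStepTm t t' → Relation.TransGen StepCmd (cmdOf t) (cmdOf t')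
  | _, _, .beta x t u l => by
      simp only [cmdOf, eTm, eCo]
      exact .single (.beta x (eTm t) (eTm u) (eCo l))
  | _, _, .pi t l u l' => by
      simp only [cmdOf, eTm, eCo, eCo_mappend]
      exact .single (.pi (eTm t) (eCo l) (.cons (eTm u) (eCo l')) trivial)
  | _, _, .sigma t x v => by
      simp only [cmdOf]
      exact sigma_core t x v
  | _, _, .lam x h => by
      simp only [cmdOf]
      exact (simTm h).lift (fun a => Cmd.cut (Tm.lam x a) .nil) (fun _ _ hh => .cutL _ (.lam x hh))
  | _, _, .appL l h => by
      simp only [cmdOf]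
      exact (simTm h).lift (fun a => Cmd.cut a (eCo l)) (fun _ _ hh => .cutL _ hh)
  | _, _, .appR t h => by
      simp only [cmdOf]
      exact (simCo h).lift (fun a => Cmd.cut (eTm t) a) (fun _ _ hh => .cutR _ hh)
theorem simCo : ∀ {l l' : MCo}, MStepCo l l' → Relation.TransGen StepCo (eCo l) (eCo l')
  | _, _, .mu h => by
      simp only [eCo, eTm]
      exact .single (.mu (by rw [free_eCo]; exact h))
  | _, _, .consL l h => by
      simp only [eCo]
      exact (simTm h).lift (fun a => Co.cons a (eCo l)) (fun _ _ hh => .consL _ hh)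
  | _, _, .consR u h => by
      simp only [eCo]
      exact (simCo h).lift (fun a => Co.cons (eTm u) a) (fun _ _ hh => .consR _ hh)
  | _, _, .sel x h => by
      rw [eCo_sel, eCo_sel]
      exact (simCmd h).lift (fun c => Co.sel x c) (fun _ _ hh => .sel x hh)
end

theorem e_strictly_simulates :
    (∀ t t' : MTm, MStepTm t t' → Relation.TransGen StepTm (eTm t) (eTm t')) ∧
    (∀ l l' : MCo, MStepCo l l' → Relation.TransGen StepCo (eCo l) (eCo l')) :=
  ⟨fun _ _ h => simTm h, fun _ _ h => simCo h⟩
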